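/- arXiv:1910.09496 — 4 statements merged into one kernel-verified Lean document; each statement's English description precedes it below -/
import Mathlib

section
/- With the notation of the previous statement, if K' = K − 2η(R + Bᵀ P̃ B)^{-1}E with 0 ≤ η ≤ 1/2 (Gauss–Newton step), then Ψ(K') − Ψ(K) = (−4η + 4η²) Eᵀ(R + Bᵀ P̃ B)^{-1} E ⪯ −2η · Eᵀ(R + Bᵀ P̃ B)^{-1}E ⪯ 0. -/
open Matrix

/-!
Writing `S = R + BᵀP̃B`, the map `Ψ` is quadratic in the gain with Hessian `S` and
"gradient" `E`: `Ψ(K + D) − Ψ(K) = DᵀSD + DᵀE + EᵀD`. For the Newton direction `D = t S⁻¹E`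
every term is a multiple of the positive semidefinite matrix `EᵀS⁻¹E`, with total coefficient
`t² + 2t`; at `t = −2η` this is `4η² − 4η`, which is `≤ −2η ≤ 0` exactly when `0 ≤ η ≤ 1/2`.
-/

section Riccati

variable {α m n l : Type*} [CommRing α] [Fintype n]

theorem quadratic_form_newton_direction [DecidableEq n] (S : Matrix n n α) (hS : Sᵀ = S)
    (hdet : IsUnit S.det) (E : Matrix n m α) (t : α) :
    (t • (S⁻¹ * E))ᵀ * S * (t • (S⁻¹ * E)) + (t • (S⁻¹ * E))ᵀ * E + Eᵀ * (t • (S⁻¹ * E)) =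
      (t ^ 2 + 2 * t) • (Eᵀ * S⁻¹ * E) := by
  have hSinv : (S⁻¹)ᵀ = S⁻¹ := by rw [transpose_nonsing_inv, hS]
  have hcancel : S * (S⁻¹ * E) = E := by
    rw [← Matrix.mul_assoc, mul_nonsing_inv _ hdet, Matrix.one_mul]
  simp only [transpose_smul, transpose_mul, hSinv, Matrix.smul_mul, Matrix.mul_smul, smul_smul,
    Matrix.mul_assoc, hcancel]
  module

variable [Fintype m] [Fintype l]

def riccatiRHS (A : Matrix m m α) (B : Matrix m n α) (C : Matrix l m α) (R : Matrix n n α)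
    (P : Matrix m m α) (L : Matrix n m α) : Matrix m m α :=
  Cᵀ * C + Lᵀ * R * L + (A - B * L)ᵀ * P * (A - B * L)

theorem riccatiRHS_add_sub (A : Matrix m m α) (B : Matrix m n α) (C : Matrix l m α)
    (R : Matrix n n α) (P : Matrix m m α) (hR : Rᵀ = R) (hP : Pᵀ = P) (K D : Matrix n m α) :
    riccatiRHS A B C R P (K + D) - riccatiRHS A B C R P K =
      Dᵀ * (R + Bᵀ * P * B) * D + Dᵀ * ((R + Bᵀ * P * B) * K - Bᵀ * P * A)
        + ((R + Bᵀ * P * B) * K - Bᵀ * P * A)ᵀ * D := by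
  simp only [riccatiRHS, transpose_add, transpose_sub, transpose_mul, hR, hP,
    transpose_transpose, Matrix.add_mul, Matrix.mul_add, Matrix.sub_mul, Matrix.mul_sub,
    Matrix.mul_assoc]
  abel

end Riccati

/-- One Gauss–Newton step decreases the Riccati right-hand side:
with `K' = K − 2η(R + BᵀP̃B)⁻¹E` and `0 ≤ η ≤ 1/2`,
`Ψ(K') − Ψ(K) = (−4η + 4η²) Eᵀ(R + BᵀP̃B)⁻¹E ⪯ −2η Eᵀ(R + BᵀP̃B)⁻¹E ⪯ 0`. -/
theorem gauss_newton_step_decrease {m d l : ℕ}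
    (A : Matrix (Fin m) (Fin m) ℝ) (B : Matrix (Fin m) (Fin d) ℝ)
    (C : Matrix (Fin l) (Fin m) ℝ)
    (R : Matrix (Fin d) (Fin d) ℝ) (Pt : Matrix (Fin m) (Fin m) ℝ)
    (hR : R.PosDef) (hPt : Pt.PosSemidef)
    (K : Matrix (Fin d) (Fin m) ℝ) (η : ℝ) (hη0 : 0 ≤ η) (hη : η ≤ 1 / 2)
    (E : Matrix (Fin d) (Fin m) ℝ) (hE : E = (R + Bᵀ * Pt * B) * K - Bᵀ * Pt * A)
    (K' : Matrix (Fin d) (Fin m) ℝ)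
    (hK' : K' = K - (2 * η) • ((R + Bᵀ * Pt * B)⁻¹ * E))
    (Ψ : Matrix (Fin d) (Fin m) ℝ → Matrix (Fin m) (Fin m) ℝ)
    (hΨ : ∀ L, Ψ L = Cᵀ * C + Lᵀ * R * L + (A - B * L)ᵀ * Pt * (A - B * L)) :
    Ψ K' - Ψ K = (-4 * η + 4 * η ^ 2) • (Eᵀ * (R + Bᵀ * Pt * B)⁻¹ * E) ∧
    ((-2 * η) • (Eᵀ * (R + Bᵀ * Pt * B)⁻¹ * E) - (Ψ K' - Ψ K)).PosSemidef ∧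
    (-(Ψ K' - Ψ K)).PosSemidef := by
  set S := R + Bᵀ * Pt * B with hSdef
  have hS : S.PosDef := hR.add_posSemidef (by simpa using hPt.conjTranspose_mul_mul_same B)
  have hM : (Eᵀ * S⁻¹ * E).PosSemidef := by
    simpa using hS.posSemidef.inv.conjTranspose_mul_mul_same E
  have hstep : K' = K + (-2 * η) • (S⁻¹ * E) := by rw [hK', sub_eq_add_neg, ← neg_smul, neg_mul]
  have hdiff : Ψ K' - Ψ K = (-4 * η + 4 * η ^ 2) • (Eᵀ * S⁻¹ * E) := by
    have hΨ' : Ψ = riccatiRHS A B C R Pt := funext hΨ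
    rw [hΨ', hstep, riccatiRHS_add_sub A B C R Pt hR.isHermitian hPt.isHermitian, ← hSdef,
      ← hE, quadratic_form_newton_direction S hS.isHermitian hS.det_pos.ne'.isUnit]
    congr 1
    ring
  refine ⟨hdiff, ?_, ?_⟩
  · rw [hdiff, ← sub_smul]
    exact hM.smul (by nlinarith)
  · rw [hdiff, ← neg_smul]
    exact hM.smul (by nlinarith)
end

section
/- With E = (R + Bᵀ P̃ B)K − Bᵀ P̃ A and Ψ as above, if K' = K − 2ηE (natural policy gradient step) with 0 ≤ η ≤ 1/(2‖R + Bᵀ P̃ B‖), then Ψ(K') − Ψ(K) ⪯ −2η EᵀE ⪯ 0. -/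
/-!
Completing the square in `L` shows that a step `K ↦ K - t • E` along the natural gradient
`E = M K - BᵀP̃A`, `M = R + BᵀP̃B`, changes the Riccati operator by `t² EᵀME - 2t EᵀE`.
With `t = 2η` this makes `-2η EᵀE - (Ψ(K') - Ψ(K)) = Eᵀ (2η (1 - 2η M)) E`, whose middle factor
is positive semidefinite because `M ⪯ ‖M‖ • 1` and `2η ‖M‖ ≤ 1`.
-/

open Matrix

namespace Matrix

variable {n : Type*} [Fintype n] [DecidableEq n]

theorem dotProduct_mulVec_le_opNorm_mul (M : Matrix n n ℝ) (x : n → ℝ) :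
    x ⬝ᵥ M *ᵥ x ≤ ‖toEuclideanCLM (𝕜 := ℝ) M‖ * (x ⬝ᵥ x) := by
  set y : EuclideanSpace ℝ n := WithLp.toLp 2 x
  have hxx : x ⬝ᵥ x = ‖y‖ ^ 2 := by
    rw [← real_inner_self_eq_norm_sq]
    simpa using (inner_toEuclideanCLM (1 : Matrix n n ℝ) y y).symm
  calc x ⬝ᵥ M *ᵥ x = inner ℝ y (toEuclideanCLM (𝕜 := ℝ) M y) :=
        (inner_toEuclideanCLM M y y).symm
    _ ≤ ‖y‖ * ‖toEuclideanCLM (𝕜 := ℝ) M y‖ := real_inner_le_norm _ _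
    _ ≤ ‖y‖ * (‖toEuclideanCLM (𝕜 := ℝ) M‖ * ‖y‖) := by
        gcongr; exact ContinuousLinearMap.le_opNorm _ _
    _ = ‖toEuclideanCLM (𝕜 := ℝ) M‖ * (x ⬝ᵥ x) := by rw [hxx]; ring

theorem IsHermitian.posSemidef_opNorm_smul_one_sub {M : Matrix n n ℝ} (hM : M.IsHermitian) :
    (‖toEuclideanCLM (𝕜 := ℝ) M‖ • 1 - M).PosSemidef := by
  refine .of_dotProduct_mulVec_nonneg ((isHermitian_one.smul (.all _)).sub hM) fun x ↦ ?_
  simpa [sub_mulVec, smul_mulVec, dotProduct_smul] using dotProduct_mulVec_le_opNorm_mul M x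

theorem IsHermitian.posSemidef_one_sub_smul {M : Matrix n n ℝ} (hM : M.IsHermitian) {s : ℝ}
    (hs : 0 ≤ s) (hsM : s * ‖toEuclideanCLM (𝕜 := ℝ) M‖ ≤ 1) : (1 - s • M).PosSemidef := by
  have h : 1 - s • M = s • (‖toEuclideanCLM (𝕜 := ℝ) M‖ • 1 - M)
      + (1 - s * ‖toEuclideanCLM (𝕜 := ℝ) M‖) • (1 : Matrix n n ℝ) := by module
  rw [h]
  exact (hM.posSemidef_opNorm_smul_one_sub.smul hs).add (PosSemidef.one.smul (sub_nonneg.2 hsM))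

end Matrix

section Riccati

variable {α : Type*} [CommRing α] {m d l : Type*} [Fintype m] [Fintype d] [Fintype l]
  (A : Matrix m m α) (B : Matrix m d α) (C : Matrix l m α) (R : Matrix d d α) (P : Matrix m m α)

def riccatiOperator (L : Matrix d m α) : Matrix m m α :=
  Cᵀ * C + Lᵀ * R * L + (A - B * L)ᵀ * P * (A - B * L)

def riccatiGradient (K : Matrix d m α) : Matrix d m α :=
  (R + Bᵀ * P * B) * K - Bᵀ * P * A

variable {R P}

theorem riccatiOperator_sub_smul_gradient (hR : Rᵀ = R) (hP : Pᵀ = P) (K : Matrix d m α)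
    (t : α) :
    riccatiOperator A B C R P (K - t • riccatiGradient A B R P K) - riccatiOperator A B C R P K =
      t ^ 2 • ((riccatiGradient A B R P K)ᵀ * (R + Bᵀ * P * B) * riccatiGradient A B R P K) -
        (2 * t) • ((riccatiGradient A B R P K)ᵀ * riccatiGradient A B R P K) := by
  simp only [riccatiOperator, riccatiGradient, transpose_add, transpose_sub, transpose_smul,
    transpose_mul, transpose_transpose, Matrix.add_mul, Matrix.sub_mul, Matrix.mul_add,
    Matrix.mul_sub, Matrix.smul_mul, Matrix.mul_smul, smul_sub, Matrix.mul_assoc, hR, hP]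
  module

end Riccati

/-- One natural policy gradient step decreases the Riccati right-hand side:
with `K' = K − 2ηE` and `0 ≤ η ≤ 1/(2‖R + BᵀP̃B‖)`,
`Ψ(K') − Ψ(K) ⪯ −2η EᵀE ⪯ 0`. -/
theorem natural_pg_step_decrease {m d l : ℕ}
    (A : Matrix (Fin m) (Fin m) ℝ) (B : Matrix (Fin m) (Fin d) ℝ)
    (C : Matrix (Fin l) (Fin m) ℝ)
    (R : Matrix (Fin d) (Fin d) ℝ) (Pt : Matrix (Fin m) (Fin m) ℝ)
    (hR : R.PosDef) (hPt : Pt.PosSemidef)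
    (K : Matrix (Fin d) (Fin m) ℝ) (η : ℝ) (hη0 : 0 ≤ η)
    (hη : η ≤ 1 / (2 * ‖Matrix.toEuclideanCLM (𝕜 := ℝ) (R + Bᵀ * Pt * B)‖))
    (E : Matrix (Fin d) (Fin m) ℝ) (hE : E = (R + Bᵀ * Pt * B) * K - Bᵀ * Pt * A)
    (K' : Matrix (Fin d) (Fin m) ℝ) (hK' : K' = K - (2 * η) • E)
    (Ψ : Matrix (Fin d) (Fin m) ℝ → Matrix (Fin m) (Fin m) ℝ)
    (hΨ : ∀ L, Ψ L = Cᵀ * C + Lᵀ * R * L + (A - B * L)ᵀ * Pt * (A - B * L)) :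
    ((-2 * η) • (Eᵀ * E) - (Ψ K' - Ψ K)).PosSemidef ∧
    (-((-2 * η) • (Eᵀ * E))).PosSemidef := by
  have hRt : Rᵀ = R := hR.isHermitian
  have hPtt : Ptᵀ = Pt := hPt.isHermitian
  set M := R + Bᵀ * Pt * B
  have hM : M.IsHermitian := hR.isHermitian.add (hPt.conjTranspose_mul_mul_same B).isHermitian
  have h2η : 0 ≤ 2 * η := by positivity
  have hstep : 2 * η * ‖toEuclideanCLM (𝕜 := ℝ) M‖ ≤ 1 := by
    rcases (norm_nonneg (toEuclideanCLM (𝕜 := ℝ) M)).eq_or_lt with h | h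
    · simp [← h]
    · rwa [le_div_iff₀ (by positivity), ← mul_assoc, mul_comm η] at hη
  have hΨK : Ψ K' - Ψ K = (2 * η) ^ 2 • (Eᵀ * M * E) - (2 * (2 * η)) • (Eᵀ * E) := by
    rw [funext hΨ, hK', hE]
    exact riccatiOperator_sub_smul_gradient A B C hRt hPtt K (2 * η)
  have hgap : (-2 * η) • (Eᵀ * E) - (Ψ K' - Ψ K) = Eᵀ * ((2 * η) • (1 - (2 * η) • M)) * E := by
    rw [hΨK]
    simp only [Matrix.mul_smul, Matrix.smul_mul, Matrix.mul_sub, Matrix.sub_mul, Matrix.mul_one]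
    module
  constructor
  · rw [hgap]
    exact ((hM.posSemidef_one_sub_smul h2η hstep).smul h2η).conjTranspose_mul_mul_same E
  · rw [neg_mul, neg_smul, neg_neg]
    exact (posSemidef_conjTranspose_mul_self E).smul h2η
end

section
/- Let P, P' be symmetric m×m matrices, D an m×n matrix, γ > 0 with both γ²I − DᵀPD ≻ 0 and γ²I − DᵀP'D ≻ 0. Then (I − γ^{-2}P'DDᵀ)^{-1}(P − γ^{-2}P'DDᵀP')(I − γ^{-2}DDᵀP')^{-1} ⪯ P̃, where P̃ = (I − γ^{-2}PDDᵀ)^{-1}P. -/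
/-!
Put `M = γ⁻²DDᵀ` and `K = D(γ²I − DᵀPD)⁻¹Dᵀ`. Then `MPK = KPM = K − M`, and these two relations
alone give `(I − PM)⁻¹P = P + PKP` (a Woodbury identity) and, by completing the square,
`(I − P'M)(P + PKP)(I − MP') = P − P'MP' + (P − P')K(P − P')`. Hence the difference of the two
sides is `(I − P'M)⁻¹(P − P')K(P − P')(I − P'M)⁻ᵀ`, a congruence of `(γ²I − DᵀPD)⁻¹ ≻ 0`.
All inverses exist by Sylvester's identity `det(I − AB) = det(I − BA)`.
-/

section Ring

variable {R : Type*} [Ring R] {P M K : R}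

theorem one_sub_mul_mul_add_mul_mul (hMPK : M * P * K = K - M) :
    (1 - P * M) * (P + P * K * P) = P := by
  calc (1 - P * M) * (P + P * K * P) = P - P * (M * P * K - (K - M)) * P := by noncomm_ring
    _ = P := by rw [hMPK, sub_self, mul_zero, zero_mul, sub_zero]

theorem one_sub_mul_mul_add_mul_mul_mul_one_sub (P' : R) (hMPK : M * P * K = K - M)
    (hKPM : K * P * M = K - M) :
    (1 - P' * M) * (P + P * K * P) * (1 - M * P')
      = P - P' * M * P' + (P - P') * K * (P - P') := by
  calc (1 - P' * M) * (P + P * K * P) * (1 - M * P')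
      = P - P' * M * P' + (P - P') * K * (P - P')
        - P' * (M * P * K - (K - M)) * (P - P * M * P')
        - (P - P') * (K * P * M - (K - M)) * P' := by
          noncomm_ring
    _ = P - P' * M * P' + (P - P') * K * (P - P') := by
          rw [hMPK, hKPM, sub_self]; noncomm_ring

end Ring

namespace Matrix

variable {m n : Type*} [Fintype m] [Fintype n] [DecidableEq n]

theorem inv_mul_sub_inv_mul_mul_inv {α : Type*} [CommRing α] [DecidableEq m]
    {P M K : Matrix m m α} (P' : Matrix m m α) (hMPK : M * P * K = K - M)
    (hKPM : K * P * M = K - M) (hA : IsUnit (1 - P * M).det) (hA' : IsUnit (1 - P' * M).det)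
    (hB' : IsUnit (1 - M * P').det) :
    (1 - P * M)⁻¹ * P - (1 - P' * M)⁻¹ * (P - P' * M * P') * (1 - M * P')⁻¹
      = (1 - P' * M)⁻¹ * ((P - P') * K * (P - P')) * (1 - M * P')⁻¹ := by
  have hG : (1 - P * M)⁻¹ * P = P + P * K * P := by
    calc (1 - P * M)⁻¹ * P = (1 - P * M)⁻¹ * ((1 - P * M) * (P + P * K * P)) := by
          rw [one_sub_mul_mul_add_mul_mul hMPK]
      _ = P + P * K * P := nonsing_inv_mul_cancel_left _ _ hA
  have hQ : P - P' * M * P' = (1 - P' * M) * (P + P * K * P) * (1 - M * P')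
      - (P - P') * K * (P - P') := by
    rw [one_sub_mul_mul_add_mul_mul_mul_one_sub P' hMPK hKPM, add_sub_cancel_right]
  have hcancel :
      (1 - P' * M)⁻¹ * ((1 - P' * M) * (P + P * K * P) * (1 - M * P')) * (1 - M * P')⁻¹
        = P + P * K * P := by
    rw [Matrix.mul_assoc (1 - P' * M), nonsing_inv_mul_cancel_left _ _ hA',
      mul_nonsing_inv_cancel_right _ _ hB']
  rw [hG, hQ, Matrix.mul_sub, Matrix.sub_mul, hcancel, sub_sub_cancel]

section Field

variable {𝕜 : Type*} [Field 𝕜] {c : 𝕜} {P : Matrix m m 𝕜} {T : Matrix n n 𝕜}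
  {D : Matrix m n 𝕜} {E : Matrix n m 𝕜}

theorem smul_mul_mul_mul_inv_mul (hc : c ≠ 0) (hT : IsUnit T.det)
    (hEPD : E * P * D = c • 1 - T) :
    c⁻¹ • (D * E) * P * (D * T⁻¹ * E) = D * T⁻¹ * E - c⁻¹ • (D * E) := by
  calc c⁻¹ • (D * E) * P * (D * T⁻¹ * E) = c⁻¹ • (D * (E * P * D) * T⁻¹ * E) := by
        simp only [Matrix.smul_mul, Matrix.mul_assoc]
    _ = c⁻¹ • (c • (D * T⁻¹ * E) - D * (T * T⁻¹) * E) := by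
        rw [hEPD]
        simp only [Matrix.mul_sub, Matrix.sub_mul, Matrix.mul_smul, Matrix.smul_mul,
          Matrix.mul_one, Matrix.mul_assoc]
    _ = D * T⁻¹ * E - c⁻¹ • (D * E) := by
        rw [mul_nonsing_inv _ hT, Matrix.mul_one, smul_sub, smul_smul, inv_mul_cancel₀ hc,
          one_smul]

theorem mul_inv_mul_mul_smul_mul (hc : c ≠ 0) (hT : IsUnit T.det)
    (hEPD : E * P * D = c • 1 - T) :
    D * T⁻¹ * E * P * (c⁻¹ • (D * E)) = D * T⁻¹ * E - c⁻¹ • (D * E) := by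
  calc D * T⁻¹ * E * P * (c⁻¹ • (D * E)) = c⁻¹ • (D * T⁻¹ * (E * P * D) * E) := by
        simp only [Matrix.mul_smul, Matrix.mul_assoc]
    _ = c⁻¹ • (c • (D * T⁻¹ * E) - D * (T⁻¹ * T) * E) := by
        rw [hEPD]
        simp only [Matrix.mul_sub, Matrix.sub_mul, Matrix.mul_smul, Matrix.smul_mul,
          Matrix.mul_one, Matrix.mul_assoc]
    _ = D * T⁻¹ * E - c⁻¹ • (D * E) := by
        rw [nonsing_inv_mul _ hT, Matrix.mul_one, smul_sub, smul_smul, inv_mul_cancel₀ hc,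
          one_smul]

theorem isUnit_det_one_sub_mul_smul_mul [DecidableEq m] (hc : c ≠ 0) (hT : IsUnit T.det)
    (hEPD : E * P * D = c • 1 - T) : IsUnit (1 - P * (c⁻¹ • (D * E))).det := by
  rw [Matrix.mul_smul, ← Matrix.mul_assoc, ← Matrix.smul_mul, det_one_sub_mul_comm,
    Matrix.mul_smul, ← Matrix.mul_assoc, hEPD, smul_sub, smul_smul, inv_mul_cancel₀ hc, one_smul,
    sub_sub_cancel, det_smul]
  exact (isUnit_iff_ne_zero.mpr (pow_ne_zero _ (inv_ne_zero hc))).mul hT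

end Field

theorem posSemidef_mul_mul_mul_inv_mul_mul_transpose {k : Type*} [Fintype k]
    {Q : Matrix m m ℝ} {T : Matrix n n ℝ} (hT : T.PosDef) (hQ : Q.IsSymm) (A : Matrix k m ℝ)
    (D : Matrix m n ℝ) : (A * (Q * (D * T⁻¹ * Dᵀ) * Q) * Aᵀ).PosSemidef := by
  have hsplit : A * (Q * (D * T⁻¹ * Dᵀ) * Q) * Aᵀ = (A * Q * D) * T⁻¹ * (A * Q * D)ᴴ := by
    rw [conjTranspose_eq_transpose_of_trivial, transpose_mul, transpose_mul, hQ.eq]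
    simp only [Matrix.mul_assoc]
  rw [hsplit]
  exact hT.posSemidef.inv.mul_mul_conjTranspose_same _

end Matrix

open Matrix

/-- Key comparison used in the discrete-time cost-difference lemma (Lemma B.1):
`(I − γ⁻²P'DDᵀ)⁻¹ (P − γ⁻²P'DDᵀP') (I − γ⁻²DDᵀP')⁻¹ ⪯ P̃ = (I − γ⁻²PDDᵀ)⁻¹P`. -/
theorem cost_difference_comparison {m n : ℕ}
    (P P' : Matrix (Fin m) (Fin m) ℝ) (D : Matrix (Fin m) (Fin n) ℝ) (γ : ℝ)
    (hγ : 0 < γ) (hP : P.IsSymm) (hP' : P'.IsSymm)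
    (hpd : (γ ^ 2 • (1 : Matrix (Fin n) (Fin n) ℝ) - Dᵀ * P * D).PosDef)
    (hpd' : (γ ^ 2 • (1 : Matrix (Fin n) (Fin n) ℝ) - Dᵀ * P' * D).PosDef) :
    ((1 - γ⁻¹ ^ 2 • (P * D * Dᵀ))⁻¹ * P
      - (1 - γ⁻¹ ^ 2 • (P' * D * Dᵀ))⁻¹
          * (P - γ⁻¹ ^ 2 • (P' * D * Dᵀ * P'))
          * (1 - γ⁻¹ ^ 2 • (D * Dᵀ * P'))⁻¹).PosSemidef := by
  set T := γ ^ 2 • (1 : Matrix (Fin n) (Fin n) ℝ) - Dᵀ * P * D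
  set M := (γ ^ 2)⁻¹ • (D * Dᵀ)
  have hc : γ ^ 2 ≠ 0 := pow_ne_zero 2 hγ.ne'
  have hT : IsUnit T.det := (isUnit_iff_isUnit_det T).mp hpd.isUnit
  have hEPD : Dᵀ * P * D = γ ^ 2 • 1 - T := (sub_sub_cancel _ _).symm
  have hA' : IsUnit (1 - P' * M).det :=
    isUnit_det_one_sub_mul_smul_mul hc ((isUnit_iff_isUnit_det _).mp hpd'.isUnit)
      (sub_sub_cancel _ _).symm
  have hB' : (1 - P' * M)ᵀ = 1 - M * P' := by
    rw [transpose_sub, transpose_one, transpose_mul, hP'.eq, transpose_smul, transpose_mul,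
      transpose_transpose]
  have hM : ∀ Q : Matrix (Fin m) (Fin m) ℝ, γ⁻¹ ^ 2 • (Q * D * Dᵀ) = Q * M := fun Q => by
    rw [inv_pow, Matrix.mul_smul, Matrix.mul_assoc]
  have hMP' : γ⁻¹ ^ 2 • (P' * D * Dᵀ * P') = P' * M * P' := by rw [← hM, Matrix.smul_mul]
  have hMP'' : γ⁻¹ ^ 2 • (D * Dᵀ * P') = M * P' := by rw [inv_pow, Matrix.smul_mul]
  rw [hM, hM, hMP', hMP'', inv_mul_sub_inv_mul_mul_inv P'
    (smul_mul_mul_mul_inv_mul hc hT hEPD) (mul_inv_mul_mul_smul_mul hc hT hEPD)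
    (isUnit_det_one_sub_mul_smul_mul hc hT hEPD) hA' (by rw [← hB', det_transpose]; exact hA'),
    ← hB', ← transpose_nonsing_inv]
  exact posSemidef_mul_mul_mul_inv_mul_mul_transpose hpd (hP.sub hP') _ D
end

section
/- Let P ≻ 0, W ≻ 0 be symmetric with W^{-1} − βP ≻ 0 for some β > 0. Then P + βP(W^{-1} − βP)^{-1}P = (P^{-1} − βW)^{-1} = (I − βPW)^{-1}P, and this expression is matrix-monotone in P: if 0 ≺ P₁ ⪯ P₂ with W^{-1} − βP₂ ≻ 0, then (P₁^{-1} − βW)^{-1} ⪯ (P₂^{-1} − βW)^{-1}. -/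
/-! With `S = W⁻¹ - βP` we have `W⁻¹ = S + βP`, so `P + βPS⁻¹P = PS⁻¹W⁻¹`; together with
`(P⁻¹ - βW)P = WS` this exhibits it as the inverse of `P⁻¹ - βW`. Being `P` plus a positive
semidefinite term it is positive definite, hence so is `P⁻¹ - βW`. Monotonicity then follows
by applying twice the Loewner antitonicity of inversion, which comes from the two Schur
complements of the block matrix `[[B, 1], [1, A⁻¹]]`: `B - A` and `A⁻¹ - B⁻¹`. -/

open Matrix
open scoped MatrixOrder ComplexOrder

namespace Matrix

section Algebra

variable {n K : Type*} [Fintype n] [DecidableEq n] [CommRing K]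

theorem inv_sub_smul_mul_add_smul_mul_inv_mul {β : K} {P W : Matrix n n K}
    (hP : IsUnit P) (hW : IsUnit W) (hS : IsUnit (W⁻¹ - β • P)) :
    (P⁻¹ - β • W) * (P + β • (P * (W⁻¹ - β • P)⁻¹ * P)) = 1 := by
  rw [isUnit_iff_isUnit_det] at hP hW hS
  set S := W⁻¹ - β • P
  have hfactor : P + β • (P * S⁻¹ * P) = P * S⁻¹ * W⁻¹ := by
    rw [← sub_add_cancel W⁻¹ (β • P), Matrix.mul_add, nonsing_inv_mul_cancel_right S _ hS,
      Matrix.mul_smul]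
  have hconj : (P⁻¹ - β • W) * P = W * S := by
    rw [Matrix.sub_mul, nonsing_inv_mul P hP, Matrix.mul_sub, mul_nonsing_inv W hW,
      Matrix.smul_mul, Matrix.mul_smul]
  rw [hfactor, ← Matrix.mul_assoc, ← Matrix.mul_assoc, hconj, Matrix.mul_assoc W,
    mul_nonsing_inv S hS, Matrix.mul_one, mul_nonsing_inv W hW]

theorem inv_inv_sub_smul_eq_inv_one_sub_smul_mul (β : K) {P : Matrix n n K} (W : Matrix n n K)
    (hP : IsUnit P) : (P⁻¹ - β • W)⁻¹ = (1 - β • (P * W))⁻¹ * P := by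
  rw [isUnit_iff_isUnit_det] at hP
  have hfactor : P⁻¹ - β • W = P⁻¹ * (1 - β • (P * W)) := by
    rw [Matrix.mul_sub, Matrix.mul_one, Matrix.mul_smul, nonsing_inv_mul_cancel_left P _ hP]
  rw [hfactor, mul_inv_rev, nonsing_inv_nonsing_inv P hP]

end Algebra

theorem PosDef.of_le {𝕜 n : Type*} [RCLike 𝕜] [Fintype n] {A B : Matrix n n 𝕜}
    (hA : A.PosDef) (hAB : A ≤ B) : B.PosDef := by
  simpa using hA.add_posSemidef hAB

theorem PosDef.inv_le_inv {𝕜 n : Type*} [RCLike 𝕜] [Fintype n] [DecidableEq n]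
    {A B : Matrix n n 𝕜} (hA : A.PosDef) (hAB : A ≤ B) : B⁻¹ ≤ A⁻¹ := by
  have hB := hA.of_le hAB
  have := hB.isUnit.invertible
  have := hA.isUnit.invertible
  have hblock : (fromBlocks B 1 (1 : Matrix n n 𝕜)ᴴ A⁻¹).PosSemidef := by
    rw [PosDef.fromBlocks₂₂ _ _ hA.inv, conjTranspose_one, Matrix.mul_one, Matrix.one_mul,
      inv_inv_of_invertible]
    exact hAB
  simpa [le_iff] using (PosDef.fromBlocks₁₁ _ _ hB).mp hblock

section Twisted

variable {n : Type*} [Fintype n] [DecidableEq n] {β : ℝ} {P W : Matrix n n ℝ}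

theorem PosDef.add_smul_mul_inv_mul {S : Matrix n n ℝ} (hβ : 0 ≤ β) (hP : P.PosDef)
    (hS : S.PosDef) : (P + β • (P * S⁻¹ * P)).PosDef := by
  have hPSP : (P * S⁻¹ * P).PosSemidef := by
    simpa only [hP.isHermitian.eq] using hS.inv.posSemidef.mul_mul_conjTranspose_same P
  exact hP.add_posSemidef (hPSP.smul hβ)

theorem PosDef.inv_sub_smul (hβ : 0 ≤ β) (hP : P.PosDef) (hW : IsUnit W)
    (hS : (W⁻¹ - β • P).PosDef) : (P⁻¹ - β • W).PosDef := by
  rw [← inv_eq_left_inv (inv_sub_smul_mul_add_smul_mul_inv_mul hP.isUnit hW hS.isUnit)]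
  exact (hP.add_smul_mul_inv_mul hβ hS).inv

theorem inv_inv_sub_smul_le (hβ : 0 ≤ β) (hW : IsUnit W) {P₁ P₂ : Matrix n n ℝ}
    (hP₁ : P₁.PosDef) (hle : P₁ ≤ P₂) (hS₂ : (W⁻¹ - β • P₂).PosDef) :
    (P₁⁻¹ - β • W)⁻¹ ≤ (P₂⁻¹ - β • W)⁻¹ :=
  ((hP₁.of_le hle).inv_sub_smul hβ hW hS₂).inv_le_inv <|
    sub_le_sub_right (hP₁.inv_le_inv hle) _

end Twisted

end Matrix

/-- Reformulation and monotonicity of the LEQG 'twisted' matrix: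
`P + βP(W⁻¹ − βP)⁻¹P = (P⁻¹ − βW)⁻¹ = (I − βPW)⁻¹P`, and this expression is matrix-monotone
in `P`. -/
theorem leqg_twisted_matrix_identity_and_monotone {m : ℕ}
    (β : ℝ) (hβ : 0 < β) (W : Matrix (Fin m) (Fin m) ℝ) (hW : W.PosDef)
    (P : Matrix (Fin m) (Fin m) ℝ) (hP : P.PosDef)
    (hcond : (W⁻¹ - β • P).PosDef) :
    P + β • (P * (W⁻¹ - β • P)⁻¹ * P) = (P⁻¹ - β • W)⁻¹ ∧
    (P⁻¹ - β • W)⁻¹ = (1 - β • (P * W))⁻¹ * P ∧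
    ∀ P₁ P₂ : Matrix (Fin m) (Fin m) ℝ, P₁.PosDef → P₂.PosDef →
      (P₂ - P₁).PosSemidef → (W⁻¹ - β • P₂).PosDef →
      ((P₂⁻¹ - β • W)⁻¹ - (P₁⁻¹ - β • W)⁻¹).PosSemidef := by
  refine ⟨(inv_eq_right_inv ?_).symm, inv_inv_sub_smul_eq_inv_one_sub_smul_mul β W hP.isUnit,
    fun P₁ P₂ hP₁ _ hle hS₂ => inv_inv_sub_smul_le hβ.le hW.isUnit hP₁ hle hS₂⟩
  exact inv_sub_smul_mul_add_smul_mul_inv_mul hP.isUnit hW.isUnit hcond.isUnit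
end
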